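/- Let μ₁ = μ₂ be the uniform distribution on [0,1]^d ⊂ ℝ^d, let c(x,y) = |x−y|² (squared Euclidean norm), and let f(x) = (x^ρ − 1)/ρ for some ρ > 1. Then there exist constants K > 0 and K' ≥ 0 such that for all ε ∈ (0,1]: OT_{f,ε} − OT ≥ K·ε^{1/((ρ−1)d/2+1)} − K'·ε. -/

import Mathlib

/-!
The diagonal coupling gives `OT ≤ 0`. Let `π = g · (μ ⊗ μ)` be a coupling, `δ > 0` and
`S = {|x - y| < δ}`. Markov's inequality gives `∫ c dπ ≥ δ² (1 - π S)`, and Young's inequality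
`a g ≤ g^ρ / ρ + a^q / q` (`q` the conjugate exponent) on `S` gives
`D_f(π, μ ⊗ μ) ≥ a π S - (a^q / q) (μ ⊗ μ) S - 1 / ρ`. With `a = δ² / ε` the terms in `π S`
cancel, and `(μ ⊗ μ) S ≤ (2δ)^d`, so `∫ c dπ + ε D_f ≥ δ² - ε (δ² / ε)^q (2δ)^d / q - ε / ρ`.
For `δ = b ε^(α/2)`, `α = 1 / ((ρ - 1) d / 2 + 1)`, both terms scale exactly like `ε^α`, and the
first one wins for small `b`.
-/

open MeasureTheory ENNReal Filter

noncomputable section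

/-- The set of couplings of two marginals. -/
def couplings2 {Y Z : Type*} [MeasurableSpace Y] [MeasurableSpace Z]
    (μ : Measure Y) (ν : Measure Z) : Set (Measure (Y × Z)) :=
  {κ | IsProbabilityMeasure κ ∧ κ.map Prod.fst = μ ∧ κ.map Prod.snd = ν}

/-- The set of couplings of `N` marginals. -/
def couplings {N : ℕ} {X : Fin N → Type*} [∀ i, MeasurableSpace (X i)]
    (μ : ∀ i, Measure (X i)) : Set (Measure (∀ i, X i)) :=
  {π | IsProbabilityMeasure π ∧ ∀ i, π.map (fun x => x i) = μ i}

/-- `p`-Wasserstein distance with respect to an abstract distance function `D`. -/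
def Wass {Z : Type*} [MeasurableSpace Z] (D : Z → Z → ℝ) (p : ℝ)
    (μ ν : Measure Z) : ℝ≥0∞ :=
  ⨅ κ ∈ couplings2 μ ν, (∫⁻ z, ENNReal.ofReal (D z.1 z.2 ^ p) ∂κ) ^ (1 / p)

/-- The product metric `d_{X,p}`. -/
def dXp {N : ℕ} {X : Fin N → Type*} [∀ i, PseudoMetricSpace (X i)] (p : ℝ)
    (x y : ∀ i, X i) : ℝ :=
  (∑ i, dist (x i) (y i) ^ p) ^ (1 / p)

/-- Finite `p`-th moment. -/
def HasMomentp {Y : Type*} [MeasurableSpace Y] [PseudoMetricSpace Y]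
    (p : ℝ) (μ : Measure Y) : Prop :=
  ∃ x₀ : Y, ∫⁻ x, ENNReal.ofReal (dist x x₀ ^ p) ∂μ < ⊤

/-- f-divergence `D_f(μ, ν)`, valued in the extended reals. -/
def fDiv {Z : Type*} [MeasurableSpace Z] (f : ℝ → ℝ) (μ ν : Measure Z) : EReal :=
  haveI := Classical.propDecidable
  if μ ≪ ν ∧ Integrable (fun z => f (μ.rnDeriv ν z).toReal) ν
  then ((∫ z, f (μ.rnDeriv ν z).toReal ∂ν : ℝ) : EReal)
  else ⊤

/-- `μ` is supported on at most `n` points. -/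
def FinitelySupported {Y : Type*} [MeasurableSpace Y] (n : ℕ) (μ : Measure Y) : Prop :=
  ∃ s : Finset Y, μ (↑s : Set Y)ᶜ = 0 ∧ s.card ≤ n

/-- `μ` is a uniform measure on `n` points. -/
def UniformOn {Y : Type*} [MeasurableSpace Y] (n : ℕ) (μ : Measure Y) : Prop :=
  ∃ y : Fin n → Y, μ = (n : ℝ≥0∞)⁻¹ • ∑ j, Measure.dirac (y j)

/-- The quantization property `quant_p(C, α)` with respect to a distance `D`. -/
def QuantD {Z : Type*} [MeasurableSpace Z] (D : Z → Z → ℝ) (p C α : ℝ)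
    (μ : Measure Z) : Prop :=
  ∀ n : ℕ, 1 ≤ n → ∃ μn : Measure Z, IsProbabilityMeasure μn ∧ FinitelySupported n μn ∧
    Wass D p μn μ ≤ ENNReal.ofReal (C * (n : ℝ) ^ (-α))

/-- The empirical quantization property `quant_p^{em}(C, α)`. -/
def QuantEm {Y : Type*} [MeasurableSpace Y] [PseudoMetricSpace Y] (p C α : ℝ)
    (μ : Measure Y) : Prop :=
  ∀ n : ℕ, 1 ≤ n → ∃ μn : Measure Y, UniformOn n μn ∧
    Wass dist p μn μ ≤ ENNReal.ofReal (C * (n : ℝ) ^ (-α))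

/-- The unregularized optimal transport value (N marginals). -/
def OTcost {N : ℕ} {X : Fin N → Type*} [∀ i, MeasurableSpace (X i)]
    (μ : ∀ i, Measure (X i)) (c : (∀ i, X i) → ℝ) : ℝ :=
  sInf ((fun π : Measure (∀ i, X i) => ∫ x, c x ∂π) '' couplings μ)

/-- The `D_f`-regularized optimal transport value (N marginals). -/
def OTf {N : ℕ} {X : Fin N → Type*} [∀ i, MeasurableSpace (X i)]
    (μ : ∀ i, Measure (X i)) (c : (∀ i, X i) → ℝ) (f : ℝ → ℝ) (ε : ℝ) : EReal :=
  sInf ((fun π : Measure (∀ i, X i) =>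
    ((∫ x, c x ∂π : ℝ) : EReal) + (ε : EReal) * fDiv f π (Measure.pi μ)) '' couplings μ)

/-- The unregularized optimal transport value (two marginals). -/
def OTcost2 {Y Z : Type*} [MeasurableSpace Y] [MeasurableSpace Z]
    (μ : Measure Y) (ν : Measure Z) (c : Y × Z → ℝ) : ℝ :=
  sInf ((fun π : Measure (Y × Z) => ∫ z, c z ∂π) '' couplings2 μ ν)

/-- The `D_f`-regularized optimal transport value (two marginals). -/
def OTf2 {Y Z : Type*} [MeasurableSpace Y] [MeasurableSpace Z]
    (μ : Measure Y) (ν : Measure Z) (c : Y × Z → ℝ) (f : ℝ → ℝ) (ε : ℝ) : EReal :=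
  sInf ((fun π : Measure (Y × Z) =>
    ((∫ z, c z ∂π : ℝ) : EReal) + (ε : EReal) * fDiv f π (μ.prod ν)) '' couplings2 μ ν)

/-- Condition `(A_{L,C})`: the integrated transport cost is Lipschitz in the coupling. -/
def CondA {N : ℕ} {X : Fin N → Type*} [∀ i, MeasurableSpace (X i)]
    [∀ i, PseudoMetricSpace (X i)]
    (p L C : ℝ) (μ : ∀ i, Measure (X i)) (c : (∀ i, X i) → ℝ) : Prop :=
  ∀ μ' : ∀ i, Measure (X i),
    (∀ i, IsProbabilityMeasure (μ' i) ∧ HasMomentp p (μ' i) ∧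
      Wass dist p (μ' i) (μ i) ≤ ENNReal.ofReal C) →
    ∀ π ∈ couplings μ, ∀ π' ∈ couplings μ',
      ENNReal.ofReal |∫ x, c x ∂π - ∫ x, c x ∂π'| ≤ ENNReal.ofReal L * Wass (dXp p) p π π'

section Couplings

variable {X Y : Type*} [MeasurableSpace X] [MeasurableSpace Y] {μ : Measure X} {ν : Measure Y}
  {π : Measure (X × Y)}

lemma ae_mem_prod_of_mem_couplings2 (hπ : π ∈ couplings2 μ ν) {s : Set X} {t : Set Y}
    (hs : ∀ᵐ x ∂μ, x ∈ s) (ht : ∀ᵐ y ∂ν, y ∈ t) : ∀ᵐ z ∂π, z ∈ s ×ˢ t := by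
  obtain ⟨-, hπ₁, hπ₂⟩ := hπ
  have h₁ := ae_of_ae_map measurable_fst.aemeasurable (hπ₁ ▸ hs)
  have h₂ := ae_of_ae_map measurable_snd.aemeasurable (hπ₂ ▸ ht)
  filter_upwards [h₁, h₂] with z hz₁ hz₂ using ⟨hz₁, hz₂⟩

lemma integrable_of_mem_couplings2 {c : X × Y → ℝ} (hc : Measurable c)
    (hπ : π ∈ couplings2 μ ν) {s : Set X} {t : Set Y} (hs : ∀ᵐ x ∂μ, x ∈ s)
    (ht : ∀ᵐ y ∂ν, y ∈ t) {C : ℝ} (hC : ∀ z ∈ s ×ˢ t, |c z| ≤ C) : Integrable c π := by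
  have := hπ.1
  refine .of_bound hc.aestronglyMeasurable C ?_
  filter_upwards [ae_mem_prod_of_mem_couplings2 hπ hs ht] with z hz using hC z hz

lemma map_diag_mem_couplings2 [IsProbabilityMeasure μ] :
    μ.map (fun x => (x, x)) ∈ couplings2 μ μ := by
  have hdiag : Measurable fun x : X => (x, x) := measurable_id.prodMk measurable_id
  refine ⟨Measure.isProbabilityMeasure_map hdiag.aemeasurable, ?_, ?_⟩
  · rw [Measure.map_map measurable_fst hdiag]; exact Measure.map_id
  · rw [Measure.map_map measurable_snd hdiag]; exact Measure.map_id

lemma OTcost2_le_zero [IsProbabilityMeasure μ] {c : X × X → ℝ} (hc : Measurable c)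
    (hc₀ : 0 ≤ c) (hc_diag : ∀ x, c (x, x) = 0) : OTcost2 μ μ c ≤ 0 := by
  have hdiag : Measurable fun x : X => (x, x) := measurable_id.prodMk measurable_id
  have h₀ : ∫ z, c z ∂(μ.map fun x => (x, x)) = 0 := by
    simp [integral_map hdiag.aemeasurable hc.aestronglyMeasurable, hc_diag]
  refine csInf_le ⟨0, ?_⟩ ⟨_, map_diag_mem_couplings2, h₀⟩
  rintro _ ⟨π, -, rfl⟩
  exact integral_nonneg hc₀

lemma le_OTf2_of_forall {c : X × Y → ℝ} {f : ℝ → ℝ} {ε B : ℝ} (hε : 0 < ε)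
    (h : ∀ π ∈ couplings2 μ ν, π ≪ μ.prod ν →
      Integrable (fun z => f (π.rnDeriv (μ.prod ν) z).toReal) (μ.prod ν) →
      B ≤ ∫ z, c z ∂π + ε * ∫ z, f (π.rnDeriv (μ.prod ν) z).toReal ∂(μ.prod ν)) :
    (B : EReal) ≤ OTf2 μ ν c f ε := by
  refine le_sInf ?_
  rintro _ ⟨π, hπ, rfl⟩
  simp only [fDiv]
  split_ifs with hreg
  · exact_mod_cast h π hπ hreg.1 hreg.2
  · rw [EReal.coe_mul_top_of_pos hε, EReal.coe_add_top]
    exact le_top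

end Couplings

section Divergence

variable {Z : Type*} [MeasurableSpace Z] {P π : Measure Z} [IsProbabilityMeasure P] {ρ : ℝ}

lemma mul_measureReal_sub_le_integral_rpow_rnDeriv [IsFiniteMeasure π] (hπ : π ≪ P)
    (hρ : 1 < ρ) {a : ℝ} (ha : 0 ≤ a) {S : Set Z} (hS : MeasurableSet S)
    (hint : Integrable (fun z => ((π.rnDeriv P z).toReal ^ ρ - 1) / ρ) P) :
    a * π.real S - a ^ ρ.conjExponent / ρ.conjExponent * P.real S - 1 / ρ ≤
      ∫ z, ((π.rnDeriv P z).toReal ^ ρ - 1) / ρ ∂P := by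
  set g := fun z => (π.rnDeriv P z).toReal
  set q := ρ.conjExponent
  have hg : Integrable g P := Measure.integrable_toReal_rnDeriv
  have hYoung : Integrable (fun z => a * g z - a ^ q / q) P :=
    (hg.const_mul a).sub (integrable_const _)
  have hlower : ∫ z, (S.indicator (fun z => a * g z - a ^ q / q) z - 1 / ρ) ∂P =
      a * π.real S - a ^ q / q * P.real S - 1 / ρ := by
    rw [integral_sub (hYoung.indicator hS) (integrable_const _), integral_indicator hS,
      integral_sub (hg.const_mul a).restrict (integrable_const _), integral_const_mul,
      Measure.setIntegral_toReal_rnDeriv hπ, integral_const, integral_const]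
    simp only [smul_eq_mul, measureReal_restrict_apply_univ, probReal_univ]
    ring
  refine hlower ▸ integral_mono ((hYoung.indicator hS).sub (integrable_const _)) hint
    fun z => ?_
  have hg₀ : 0 ≤ g z := ENNReal.toReal_nonneg
  show _ ≤ (g z ^ ρ - 1) / ρ
  rw [sub_div]
  by_cases hz : z ∈ S
  · have := Real.young_inequality_of_nonneg hg₀ ha (Real.HolderConjugate.conjExponent hρ)
    simp only [Set.indicator_of_mem hz]
    linarith
  · have : 0 ≤ g z ^ ρ / ρ := by positivity
    simp only [Set.indicator_of_notMem hz]
    linarith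

lemma le_integral_add_mul_integral_rpow_rnDeriv [IsProbabilityMeasure π] (hπ : π ≪ P)
    (hρ : 1 < ρ) (hint : Integrable (fun z => ((π.rnDeriv P z).toReal ^ ρ - 1) / ρ) P)
    {c : Z → ℝ} (hc : Measurable c) (hc₀ : 0 ≤ c) (hc_int : Integrable c π) {ε : ℝ}
    (hε : 0 < ε) (δ : ℝ) :
    δ ^ 2 - ε * (δ ^ 2 / ε) ^ ρ.conjExponent / ρ.conjExponent * P.real {z | c z < δ ^ 2}
        - ε / ρ ≤
      ∫ z, c z ∂π + ε * ∫ z, ((π.rnDeriv P z).toReal ^ ρ - 1) / ρ ∂P := by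
  set S := {z | c z < δ ^ 2}
  have hS : MeasurableSet S := measurableSet_lt hc measurable_const
  have hMarkov : δ ^ 2 * (1 - π.real S) ≤ ∫ z, c z ∂π := by
    have h := mul_meas_ge_le_integral_of_nonneg (.of_forall hc₀) hc_int (δ ^ 2)
    rw [← probReal_compl_eq_one_sub hS]
    convert h using 4
    ext; simp [S]
  have hYoung := mul_measureReal_sub_le_integral_rpow_rnDeriv hπ hρ
    (div_nonneg (sq_nonneg δ) hε.le) hS hint
  have hcancel : ε * (δ ^ 2 / ε) = δ ^ 2 := mul_div_cancel₀ _ hε.ne'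
  calc _ = δ ^ 2 * (1 - π.real S) + ε * (δ ^ 2 / ε * π.real S
          - (δ ^ 2 / ε) ^ ρ.conjExponent / ρ.conjExponent * P.real S - 1 / ρ) := by
        linear_combination (-π.real S) * hcancel
    _ ≤ _ := add_le_add hMarkov (mul_le_mul_of_nonneg_left hYoung hε.le)

end Divergence

lemma prod_setOf_dist_lt_le {Z : Type*} [PseudoMetricSpace Z] [MeasurableSpace Z]
    [OpensMeasurableSpace Z] [SecondCountableTopology Z] {μ ν : Measure Z}
    [IsProbabilityMeasure μ] [SFinite ν] {r : ℝ} {C : ℝ≥0∞}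
    (hν : ∀ x, ν (Metric.ball x r) ≤ C) : (μ.prod ν) {z | dist z.1 z.2 < r} ≤ C := by
  rw [Measure.prod_apply (measurableSet_lt measurable_dist measurable_const)]
  calc ∫⁻ x, ν (Prod.mk x ⁻¹' {z | dist z.1 z.2 < r}) ∂μ
      = ∫⁻ x, ν (Metric.ball x r) ∂μ := by
        congr! 3 with x
        ext y
        simp [dist_comm]
    _ ≤ ∫⁻ _, C ∂μ := lintegral_mono hν
    _ = C := by simp

lemma pi_ball_le_of_le_volume {ι : Type*} [Fintype ι] {ν : ι → Measure ℝ}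
    [∀ i, SigmaFinite (ν i)] (hν : ∀ i, ν i ≤ volume) (x : ι → ℝ) {r : ℝ} (hr : 0 < r) :
    Measure.pi ν (Metric.ball x r) ≤ ENNReal.ofReal ((2 * r) ^ Fintype.card ι) := by
  calc Measure.pi ν (Metric.ball x r) ≤ volume (Metric.ball x r) := by
        rw [ball_pi x hr, Measure.pi_pi, volume_pi, Measure.pi_pi]
        exact Finset.prod_le_prod' fun i _ => hν i _
    _ = _ := Real.volume_pi_ball x hr

lemma dist_lt_of_sum_sq_lt {ι : Type*} [Fintype ι] {x y : ι → ℝ} {r : ℝ} (hr : 0 < r)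
    (h : ∑ i, (x i - y i) ^ 2 < r ^ 2) : dist x y < r := by
  refine (dist_pi_lt_iff hr).2 fun i => ?_
  rw [Real.dist_eq]
  refine abs_lt_of_sq_lt_sq (lt_of_le_of_lt ?_ h) hr.le
  exact Finset.single_le_sum (f := fun i => (x i - y i) ^ 2) (fun j _ => sq_nonneg _)
    (Finset.mem_univ i)

lemma measureReal_sum_sq_sub_lt_le {ι : Type*} [Fintype ι] {μ : Measure (ι → ℝ)}
    [IsProbabilityMeasure μ] {ν : ι → Measure ℝ} [∀ i, SigmaFinite (ν i)]
    (hν : ∀ i, ν i ≤ volume) {δ : ℝ} (hδ : 0 < δ) :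
    (μ.prod (Measure.pi ν)).real {z | ∑ i, (z.1 i - z.2 i) ^ 2 < δ ^ 2} ≤
      (2 * δ) ^ Fintype.card ι := by
  refine ENNReal.toReal_le_of_le_ofReal (by positivity) ?_
  calc (μ.prod (Measure.pi ν)) {z | ∑ i, (z.1 i - z.2 i) ^ 2 < δ ^ 2}
      ≤ (μ.prod (Measure.pi ν)) {z | dist z.1 z.2 < δ} :=
        measure_mono fun z hz => dist_lt_of_sum_sq_lt hδ hz
    _ ≤ _ := prod_setOf_dist_lt_le fun x => pi_ball_le_of_le_volume hν x hδ

lemma exists_pos_mul_rpow_le_sq {C e : ℝ} (hC : 0 < C) (he : 2 < e) :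
    ∃ b > 0, C * b ^ e ≤ b ^ 2 := by
  set b := C ^ (-(e - 2)⁻¹)
  have hb : 0 < b := by positivity
  refine ⟨b, hb, le_of_eq ?_⟩
  have hbe : b ^ (e - 2) = C⁻¹ := by
    rw [← Real.rpow_mul hC.le, neg_mul, inv_mul_cancel₀ (by linarith), Real.rpow_neg_one]
  rw [← Real.rpow_two, ← sub_add_cancel e 2, Real.rpow_add hb, hbe,
    ← mul_assoc, mul_inv_cancel₀ hC.ne', one_mul]

lemma one_add_sub_one_mul_conjExponent_add (d : ℕ) {ρ : ℝ} (hρ : 1 < ρ) :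
    1 + (1 / ((ρ - 1) * d / 2 + 1) - 1) * ρ.conjExponent + 1 / ((ρ - 1) * d / 2 + 1) * d / 2 =
      1 / ((ρ - 1) * d / 2 + 1) := by
  have hD : (ρ - 1) * d / 2 + 1 ≠ 0 := by
    have : 0 < ρ - 1 := by linarith
    positivity
  have : ρ - 1 ≠ 0 := by linarith
  generalize hα : (ρ - 1) * d / 2 + 1 = D at hD ⊢
  rw [Real.conjExponent]
  field_simp
  linear_combination 2 * hα

lemma exists_mul_rpow_le_sq_sub (d : ℕ) {ρ : ℝ} (hρ : 1 < ρ) :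
    ∃ K > 0, ∀ ε > 0, ∃ δ > 0, K * ε ^ (1 / ((ρ - 1) * d / 2 + 1)) ≤
      δ ^ 2 - ε * (δ ^ 2 / ε) ^ ρ.conjExponent / ρ.conjExponent * (2 * δ) ^ d := by
  set q := ρ.conjExponent
  set α := 1 / ((ρ - 1) * d / 2 + 1)
  have hq : 1 < q := (Real.HolderConjugate.conjExponent hρ).symm.lt
  obtain ⟨b, hb, hbC⟩ := exists_pos_mul_rpow_le_sq (C := 2 ^ (d + 1) / q) (e := 2 * q + d)
    (by positivity) (by have : (0 : ℝ) ≤ d := d.cast_nonneg; linarith)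
  refine ⟨b ^ 2 / 2, by positivity, fun ε hε => ⟨b * ε ^ (α / 2), by positivity, ?_⟩⟩
  have hδ : (b * ε ^ (α / 2)) ^ 2 = b ^ 2 * ε ^ α := by
    rw [mul_pow, ← Real.rpow_natCast (ε ^ (α / 2)), ← Real.rpow_mul hε.le]
    norm_num
  have hloss : ε * (b ^ 2 * ε ^ α / ε) ^ q / q * (2 * (b * ε ^ (α / 2))) ^ d =
      2 ^ d / q * b ^ (2 * q + d) * ε ^ α := by
    rw [mul_div_assoc (b ^ 2), ← Real.rpow_sub_one hε.ne',
      Real.mul_rpow (by positivity) (by positivity), ← Real.rpow_natCast b 2,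
      ← Real.rpow_mul hb.le, ← Real.rpow_mul hε.le, mul_pow, mul_pow,
      ← Real.rpow_natCast (ε ^ (α / 2)), ← Real.rpow_mul hε.le, ← Real.rpow_natCast b d]
    have hexp : 1 + (α - 1) * q + α * d / 2 = α := one_add_sub_one_mul_conjExponent_add d hρ
    conv_rhs => rw [Real.rpow_add hb, ← hexp, Real.rpow_add hε, Real.rpow_add hε, Real.rpow_one]
    push_cast
    ring_nf
  rw [hδ, hloss]
  have : 2 ^ d / q * b ^ (2 * q + d) ≤ b ^ 2 / 2 := by
    rw [pow_succ] at hbC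
    linarith [show 2 ^ d * 2 / q * b ^ (2 * q + d) = 2 * (2 ^ d / q * b ^ (2 * q + d)) by ring]
  nlinarith [Real.rpow_pos_of_pos hε α]

lemma sum_sq_sub_le_card {ι : Type*} [Fintype ι] {x y : ι → ℝ}
    (hx : ∀ i, x i ∈ Set.Icc (0 : ℝ) 1) (hy : ∀ i, y i ∈ Set.Icc (0 : ℝ) 1) :
    ∑ i, (x i - y i) ^ 2 ≤ Fintype.card ι := by
  rw [← nsmul_one, ← Finset.card_univ, ← Finset.sum_const]
  refine Finset.sum_le_sum fun i _ => ?_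
  obtain ⟨hx₀, hx₁⟩ := hx i
  obtain ⟨hy₀, hy₁⟩ := hy i
  nlinarith

section UnitCube

variable (ι : Type*) [Fintype ι]

def unitCube : Measure (ι → ℝ) := Measure.pi fun _ => volume.restrict (Set.Icc (0 : ℝ) 1)

instance : IsProbabilityMeasure (unitCube ι) :=
  have : IsProbabilityMeasure (volume.restrict (Set.Icc (0 : ℝ) 1)) := ⟨by simp⟩
  inferInstanceAs (IsProbabilityMeasure (Measure.pi _))

variable {ι}

lemma ae_mem_Icc_unitCube : ∀ᵐ x ∂unitCube ι, ∀ i, x i ∈ Set.Icc (0 : ℝ) 1 :=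
  eventually_all.2 fun _ => Measure.tendsto_eval_ae_ae.eventually
    (ae_restrict_mem measurableSet_Icc)

lemma integrable_sum_sq_sub_of_mem_couplings2 {π : Measure ((ι → ℝ) × (ι → ℝ))}
    (hπ : π ∈ couplings2 (unitCube ι) (unitCube ι)) :
    Integrable (fun z => ∑ i, (z.1 i - z.2 i) ^ 2) π :=
  integrable_of_mem_couplings2 (by fun_prop) hπ ae_mem_Icc_unitCube ae_mem_Icc_unitCube
    fun z ⟨hz₁, hz₂⟩ => (abs_of_nonneg (by positivity)).trans_le (sum_sq_sub_le_card hz₁ hz₂)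

lemma le_integral_sum_sq_sub_add_mul_integral_rpow_rnDeriv {ρ : ℝ} (hρ : 1 < ρ)
    {π : Measure ((ι → ℝ) × (ι → ℝ))} (hπ : π ∈ couplings2 (unitCube ι) (unitCube ι))
    (hac : π ≪ (unitCube ι).prod (unitCube ι))
    (hint : Integrable (fun z => ((π.rnDeriv ((unitCube ι).prod (unitCube ι)) z).toReal ^ ρ
      - 1) / ρ) ((unitCube ι).prod (unitCube ι))) {ε δ : ℝ} (hε : 0 < ε) (hδ : 0 < δ) :
    δ ^ 2 - ε * (δ ^ 2 / ε) ^ ρ.conjExponent / ρ.conjExponent * (2 * δ) ^ Fintype.card ι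
        - ε / ρ ≤
      ∫ z, ∑ i, (z.1 i - z.2 i) ^ 2 ∂π + ε *
        ∫ z, ((π.rnDeriv ((unitCube ι).prod (unitCube ι)) z).toReal ^ ρ - 1) / ρ
          ∂((unitCube ι).prod (unitCube ι)) := by
  have := hπ.1
  have hnear : ((unitCube ι).prod (unitCube ι)).real {z | ∑ i, (z.1 i - z.2 i) ^ 2 < δ ^ 2} ≤
      (2 * δ) ^ Fintype.card ι :=
    measureReal_sum_sq_sub_lt_le (fun _ => Measure.restrict_le_self) hδ
  have hloss : 0 ≤ ε * (δ ^ 2 / ε) ^ ρ.conjExponent / ρ.conjExponent := by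
    have := (Real.HolderConjugate.conjExponent hρ).symm.pos
    positivity
  calc _ ≤ δ ^ 2 - ε * (δ ^ 2 / ε) ^ ρ.conjExponent / ρ.conjExponent *
        ((unitCube ι).prod (unitCube ι)).real {z | ∑ i, (z.1 i - z.2 i) ^ 2 < δ ^ 2}
          - ε / ρ := by
        linarith [mul_le_mul_of_nonneg_left hnear hloss]
    _ ≤ _ := le_integral_add_mul_integral_rpow_rnDeriv hac hρ hint (by fun_prop)
        (fun z => by positivity) (integrable_sum_sq_sub_of_mem_couplings2 hπ) hε δ

end UnitCube

theorem sharpness_quadratic_Lrho_general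
    (d : ℕ) (ρ : ℝ) (hρ : 1 < ρ)
    (μ : Measure (Fin d → ℝ))
    (hμ : μ = Measure.pi (fun _ : Fin d => volume.restrict (Set.Icc (0 : ℝ) 1)))
    (c : (Fin d → ℝ) × (Fin d → ℝ) → ℝ)
    (hc : ∀ z : (Fin d → ℝ) × (Fin d → ℝ), c z = ∑ i, (z.1 i - z.2 i) ^ 2) :
    ∃ K : ℝ, 0 < K ∧ ∃ K' : ℝ, 0 ≤ K' ∧ ∀ ε : ℝ, ε ∈ Set.Ioc (0 : ℝ) 1 →
      ((OTcost2 μ μ c + K * ε ^ (1 / ((ρ - 1) * d / 2 + 1)) - K' * ε : ℝ) : EReal) ≤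
        OTf2 μ μ c (fun x => (x ^ ρ - 1) / ρ) ε := by
  obtain rfl : μ = unitCube (Fin d) := hμ
  obtain rfl : c = fun z => ∑ i, (z.1 i - z.2 i) ^ 2 := funext hc
  have hOT : OTcost2 (unitCube (Fin d)) (unitCube (Fin d))
      (fun z => ∑ i, (z.1 i - z.2 i) ^ 2) ≤ 0 :=
    OTcost2_le_zero (by fun_prop) (fun z => by positivity) (by simp)
  obtain ⟨K, hK, hKδ⟩ := exists_mul_rpow_le_sq_sub d hρ
  refine ⟨K, hK, 1 / ρ, by positivity, fun ε ⟨hε, _⟩ => ?_⟩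
  refine (EReal.coe_le_coe_iff.2 (by linarith)).trans
    (le_OTf2_of_forall (B := K * ε ^ (1 / ((ρ - 1) * d / 2 + 1)) - 1 / ρ * ε) hε ?_)
  intro π hπ hac hint
  obtain ⟨δ, hδ, hKδ⟩ := hKδ ε hε
  have := le_integral_sum_sq_sub_add_mul_integral_rpow_rnDeriv hρ hπ hac hint hε hδ
  rw [Fintype.card_fin] at this
  linarith [one_div_mul_eq_div ρ ε]

/-- Remark 4.3 (sharpness for quadratic cost, `L^ρ` case): for `μ₁ = μ₂` uniform on `[0,1]^d`,
`c(x,y) = |x − y|²` and `f x = (x^ρ − 1)/ρ` with `ρ > 1`, there are `K > 0`, `K' ≥ 0` such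
that for all `ε ∈ (0,1]`: `OT_{f,ε} − OT ≥ K ε^{1/((ρ−1)d/2+1)} − K' ε`. -/
theorem sharpness_quadratic_Lrho
    (d : ℕ) (hd : 0 < d) (ρ : ℝ) (hρ : 1 < ρ)
    (μ : Measure (Fin d → ℝ))
    (hμ : μ = Measure.pi (fun _ : Fin d => volume.restrict (Set.Icc (0 : ℝ) 1)))
    (c : (Fin d → ℝ) × (Fin d → ℝ) → ℝ)
    (hc : ∀ z : (Fin d → ℝ) × (Fin d → ℝ), c z = ∑ i, (z.1 i - z.2 i) ^ 2) :
    ∃ K : ℝ, 0 < K ∧ ∃ K' : ℝ, 0 ≤ K' ∧ ∀ ε : ℝ, ε ∈ Set.Ioc (0 : ℝ) 1 →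
      ((OTcost2 μ μ c + K * ε ^ (1 / ((ρ - 1) * d / 2 + 1)) - K' * ε : ℝ) : EReal) ≤
        OTf2 μ μ c (fun x => (x ^ ρ - 1) / ρ) ε :=
  sharpness_quadratic_Lrho_general d ρ hρ μ hμ c hc
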